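/- Let A and B be additive commutative groups and let S be an additive submonoid of A whose closure as an additive subgroup is all of A (so S is a family of generators of A closed under addition). If f, g : A → B are polynomial maps with f s = g s for every s ∈ S, then f = g. -/

import Mathlib

/-- A map `f : M → B` has degree `≤ 0` if it is constant, and degree `≤ n + 1` if for every
`a : M` the map `x ↦ f (x + a) - f x - f a` has degree `≤ n`. -/
def PolyDegLE {M B : Type*} [AddCommMonoid M] [AddCommGroup B] : ℕ → (M → B) → Prop
  | 0, f => ∃ b, ∀ x, f x = b
  | n + 1, f => ∀ a : M, PolyDegLE n fun x => f (x + a) - f x - f a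

/-- A map is polynomial if it has degree `≤ n` for some natural number `n`. -/
def IsPolynomialMap {M B : Type*} [AddCommMonoid M] [AddCommGroup B] (f : M → B) : Prop :=
  ∃ n, PolyDegLE n f

/-!
By induction on the degree, a polynomial map `p` vanishing on `S` vanishes everywhere. For
`a ∈ S` the difference `x ↦ p (x + a) - p x - p a` has lower degree and vanishes on `S`, hence
everywhere, so `p (x + a) = p x + p a`. Writing an arbitrary `x` as `s - t` with `s, t ∈ S`
then gives `p s = p x + p t`, that is `p x = 0`. Apply this to `f - g`.
-/

namespace PolyDegLE

variable {M B : Type*} [AddCommMonoid M] [AddCommGroup B]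

theorem sub : ∀ {n : ℕ} {f g : M → B}, PolyDegLE n f → PolyDegLE n g → PolyDegLE n (f - g)
  | 0, _, _, ⟨b, hb⟩, ⟨c, hc⟩ => ⟨b - c, fun x => by simp only [Pi.sub_apply, hb, hc]⟩
  | _ + 1, f, g, hf, hg => fun a => by
      convert sub (hf a) (hg a) using 1
      ext x
      simp only [Pi.sub_apply]
      abel

theorem succ : ∀ {n : ℕ} {f : M → B}, PolyDegLE n f → PolyDegLE (n + 1) f
  | 0, _, ⟨b, hb⟩ => fun _ => ⟨-b, fun x => by simp only [hb]; abel⟩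
  | _ + 1, _, hf => fun a => succ (hf a)

theorem mono {n m : ℕ} (h : n ≤ m) {f : M → B} (hf : PolyDegLE n f) : PolyDegLE m f := by
  induction m, h using Nat.le_induction with
  | base => exact hf
  | succ m _ ih => exact ih.succ

end PolyDegLE

theorem IsPolynomialMap.sub {M B : Type*} [AddCommMonoid M] [AddCommGroup B] {f g : M → B}
    (hf : IsPolynomialMap f) (hg : IsPolynomialMap g) : IsPolynomialMap (f - g) := by
  obtain ⟨n, hf⟩ := hf
  obtain ⟨m, hg⟩ := hg
  exact ⟨max n m, (hf.mono (le_max_left n m)).sub (hg.mono (le_max_right n m))⟩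

theorem AddSubmonoid.exists_sub_eq_of_closure_eq_top {A : Type*} [AddCommGroup A]
    {S : AddSubmonoid A} (hS : AddSubgroup.closure (S : Set A) = ⊤) (x : A) :
    ∃ s ∈ S, ∃ t ∈ S, s - t = x := by
  have hx : x ∈ AddSubgroup.closure (S : Set A) := hS ▸ AddSubgroup.mem_top x
  induction hx using AddSubgroup.closure_induction with
  | mem y hy => exact ⟨y, hy, 0, S.zero_mem, sub_zero y⟩
  | zero => exact ⟨0, S.zero_mem, 0, S.zero_mem, sub_zero 0⟩
  | add _ _ _ _ hy hz =>
      obtain ⟨s, hs, t, ht, rfl⟩ := hy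
      obtain ⟨s', hs', t', ht', rfl⟩ := hz
      exact ⟨s + s', S.add_mem hs hs', t + t', S.add_mem ht ht', by abel⟩
  | neg _ _ hy =>
      obtain ⟨s, hs, t, ht, rfl⟩ := hy
      exact ⟨t, ht, s, hs, (neg_sub s t).symm⟩

theorem PolyDegLE.eq_zero_of_forall_mem_eq_zero {A B : Type*} [AddCommGroup A] [AddCommGroup B]
    {S : AddSubmonoid A} (hS : AddSubgroup.closure (S : Set A) = ⊤) :
    ∀ {n : ℕ} {p : A → B}, PolyDegLE n p → (∀ s ∈ S, p s = 0) → p = 0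
  | 0, p, ⟨b, hb⟩, hpS => by
      have hb0 : b = 0 := hb 0 ▸ hpS 0 S.zero_mem
      exact funext fun x => (hb x).trans hb0
  | _ + 1, p, hp, hpS => by
      have hadd : ∀ a ∈ S, ∀ y, p (y + a) = p y + p a := by
        intro a ha y
        have hdiff := eq_zero_of_forall_mem_eq_zero hS (hp a) fun s hs => by
          simp only [hpS s hs, hpS a ha, hpS _ (S.add_mem hs ha), sub_zero]
        simpa only [Pi.zero_apply, sub_sub, sub_eq_zero] using congrFun hdiff y
      funext x
      obtain ⟨s, hs, t, ht, rfl⟩ := AddSubmonoid.exists_sub_eq_of_closure_eq_top hS x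
      have hst := hadd t ht (s - t)
      rwa [sub_add_cancel, hpS s hs, hpS t ht, add_zero, eq_comm] at hst

/-- If two polynomial maps `A → B` between additive commutative groups agree on an additive
submonoid `S` of `A` which generates `A` as a group, then they are equal. -/
theorem stmt1 {A B : Type*} [AddCommGroup A] [AddCommGroup B]
    (S : AddSubmonoid A) (hS : AddSubgroup.closure (S : Set A) = ⊤)
    (f g : A → B) (hf : IsPolynomialMap f) (hg : IsPolynomialMap g)
    (hfg : ∀ s ∈ S, f s = g s) : f = g := by
  obtain ⟨n, hdeg⟩ := hf.sub hg
  refine sub_eq_zero.mp (hdeg.eq_zero_of_forall_mem_eq_zero hS fun s hs => ?_)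
  rw [Pi.sub_apply, hfg s hs, sub_self]
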